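/- Let α ∈ (0,1] and let x ∈ (0, ᾱ) be irrational. Then for every n ≥ 0 one has 1/(1+α) < β_{α,n}·q_{α,n+1} < 1/α. -/

import Mathlib

open Set Filter

/-- The `α`-continued fraction map `A_α(x) = |1/x − ⌊1/x + 1 − α⌋|`. -/
noncomputable def Aa (α : ℝ) (x : ℝ) : ℝ := |1 / x - ⌊1 / x + 1 - α⌋|

/-- The orbit `x_{α,n}` of `x` under `A_α` (with `x_{α,0} = x`). -/
noncomputable def xa (α x : ℝ) (n : ℕ) : ℝ := (Aa α)^[n] x

/-- `betaP α x (n+1) = β_{α,n} = x_{α,0}⋯x_{α,n}`; `betaP α x 0 = β_{α,-1} = 1`. -/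
noncomputable def betaP (α x : ℝ) (n : ℕ) : ℝ := ∏ i ∈ Finset.range n, xa α x i

/-- `aa α x n = a_{α,n+1} = ⌊1/x_{α,n} + 1 − α⌋`. -/
noncomputable def aa (α x : ℝ) (n : ℕ) : ℤ := ⌊1 / xa α x n + 1 - α⌋

/-- `ea α x n = ε_{α,n}`: `ε_{α,0} = 1` and `ε_{α,n+1} = sign(1/x_{α,n} − a_{α,n+1})`. -/
noncomputable def ea (α x : ℝ) : ℕ → ℝ
  | 0 => 1
  | n + 1 => if 0 < 1 / xa α x n - aa α x n then 1 else -1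

/-- `pa α x (n+1) = p_{α,n}`; `pa α x 0 = p_{α,-1} = 1`. -/
noncomputable def pa (α x : ℝ) : ℕ → ℝ
  | 0 => 1
  | 1 => 0
  | n + 2 => aa α x n * pa α x (n + 1) + ea α x n * pa α x n

/-- `qa α x (n+1) = q_{α,n}`; `qa α x 0 = q_{α,-1} = 0`. -/
noncomputable def qa (α x : ℝ) : ℕ → ℝ
  | 0 => 0
  | 1 => 1
  | n + 2 => aa α x n * qa α x (n + 1) + ea α x n * qa α x n


/-! The identity `β_n (q_{n+1} + d_n q_n) = 1`, where `d_n = 1/x_n − a_{n+1} = ε_{n+1} x_{n+1}`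
lies in `[α − 1, α)`, writes `β_n q_{n+1}` as `q_{n+1} / (q_{n+1} + d_n q_n)`. Since the `q_n`
increase, `d_n q_n / q_{n+1}` lies in `[α − 1, α)` too, which gives both bounds once the
endpoint `α − 1` is excluded. Reaching it forces `d_n = α − 1` and `q_n = q_{n+1}`; but
`d_n = α − 1` makes `a_{n+1}` too large (`≥ 2`, and `≥ 3` after a negative sign) for the
recurrence to stall. -/

noncomputable def da (α x : ℝ) (n : ℕ) : ℝ := 1 / xa α x n - aa α x n

lemma xa_succ (α x : ℝ) (n : ℕ) : xa α x (n + 1) = |da α x n| :=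
  Function.iterate_succ_apply' (Aa α) n x

lemma da_mem_Ico (α x : ℝ) (n : ℕ) : da α x n ∈ Ico (α - 1) α := by
  have h₁ := Int.floor_le (1 / xa α x n + 1 - α)
  have h₂ := Int.sub_one_lt_floor (1 / xa α x n + 1 - α)
  rw [da, aa]
  constructor <;> linarith

lemma le_aa_iff (α x : ℝ) (n : ℕ) (k : ℤ) : k ≤ aa α x n ↔ k + α - 1 ≤ 1 / xa α x n := by
  rw [aa, Int.le_floor]
  constructor <;> intro h <;> linarith

lemma ea_eq_one_or_neg_one (α x : ℝ) (n : ℕ) : ea α x n = 1 ∨ ea α x n = -1 := by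
  cases n with
  | zero => exact Or.inl rfl
  | succ n => rw [ea]; split_ifs <;> simp

lemma ea_succ_mul_xa_succ (α x : ℝ) (n : ℕ) : ea α x (n + 1) * xa α x (n + 1) = da α x n := by
  rw [xa_succ, ea, ← da]
  split_ifs with h
  · rw [one_mul, abs_of_pos h]
  · rw [abs_of_nonpos (not_lt.mp h), neg_one_mul, neg_neg]

lemma xa_succ_le_of_ea_succ_eq_neg_one {α x : ℝ} {n : ℕ} (h : ea α x (n + 1) = -1) :
    xa α x (n + 1) ≤ 1 - α := by
  have hd := ea_succ_mul_xa_succ α x n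
  rw [h] at hd
  linarith [(da_mem_Ico α x n).1]

lemma one_add_lt_inv_xa_succ {α x : ℝ} {n : ℕ} (hα : 0 < α) (hpos : 0 < xa α x (n + 1))
    (h : ea α x (n + 1) = -1) : 1 + α < 1 / xa α x (n + 1) := by
  rw [lt_div_iff₀ hpos]
  nlinarith [xa_succ_le_of_ea_succ_eq_neg_one h]

lemma qa_add_two (α x : ℝ) (n : ℕ) :
    qa α x (n + 2) = aa α x n * qa α x (n + 1) + ea α x n * qa α x n := rfl

lemma add_one_mul_le_mul_add_mul {a ε q₀ q₁ k : ℝ} (hε : ε = 1 ∨ ε = -1) (hq₀ : 0 ≤ q₀)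
    (hq : q₀ ≤ q₁) (ha : k + 1 ≤ a) (ha' : ε = -1 → k + 2 ≤ a) :
    (k + 1) * q₁ ≤ a * q₁ + ε * q₀ := by
  rcases hε with rfl | rfl
  · nlinarith
  · nlinarith [ha' rfl]

lemma irrational_da {α x : ℝ} {n : ℕ} (h : Irrational (xa α x n)) : Irrational (da α x n) := by
  rw [da, one_div]
  exact h.inv.sub_intCast _

section Orbit

variable {α x : ℝ} (hirr : Irrational x) (hx : x ∈ Ioo 0 (max α (1 - α)))
include hirr hx

lemma irrational_xa_and_mem_Ioc (n : ℕ) :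
    Irrational (xa α x n) ∧ xa α x n ∈ Ioc 0 (max α (1 - α)) := by
  induction n with
  | zero => exact ⟨hirr, hx.1, hx.2.le⟩
  | succ n ih =>
    have hd := irrational_da ih.1
    obtain ⟨hlo, hhi⟩ := da_mem_Ico α x n
    rw [xa_succ]
    refine ⟨?_, abs_pos.mpr hd.ne_zero, abs_le.mpr ⟨?_, ?_⟩⟩
    · rcases abs_choice (da α x n) with h | h <;> rw [h]
      exacts [hd, hd.neg]
    · linarith [le_max_right α (1 - α)]
    · linarith [le_max_left α (1 - α)]

lemma xa_pos (n : ℕ) : 0 < xa α x n := (irrational_xa_and_mem_Ioc hirr hx n).2.1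

lemma da_ne_zero (n : ℕ) : da α x n ≠ 0 :=
  (irrational_da (irrational_xa_and_mem_Ioc hirr hx n).1).ne_zero

lemma xa_lt_one (hα : α ∈ Icc 0 1) (n : ℕ) : xa α x n < 1 := by
  obtain ⟨hirr_n, -, hle⟩ := irrational_xa_and_mem_Ioc hirr hx n
  exact (hle.trans (max_le hα.2 (by linarith [hα.1]))).lt_of_ne hirr_n.ne_one

lemma one_le_aa (hα : α ∈ Icc 0 1) (n : ℕ) : 1 ≤ aa α x n := by
  rw [le_aa_iff]
  push_cast
  linarith [hα.2, one_le_one_div (xa_pos hirr hx n) (xa_lt_one hirr hx hα n).le]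

lemma two_le_aa_succ (hα : 0 < α) {n : ℕ} (h : ea α x (n + 1) = -1) : 2 ≤ aa α x (n + 1) := by
  rw [le_aa_iff]
  push_cast
  linarith [one_add_lt_inv_xa_succ hα (xa_pos hirr hx (n + 1)) h]

lemma qa_le_qa_succ (hα : α ∈ Ioc 0 1) (n : ℕ) : 0 ≤ qa α x n ∧ qa α x n ≤ qa α x (n + 1) := by
  induction n with
  | zero => norm_num [qa]
  | succ n ih =>
    refine ⟨ih.1.trans ih.2, ?_⟩
    rw [qa_add_two]
    have step := add_one_mul_le_mul_add_mul (a := aa α x n) (k := 0)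
      (ea_eq_one_or_neg_one α x n) ih.1 ih.2
      (by exact_mod_cast one_le_aa hirr hx (Ioc_subset_Icc_self hα) n) fun h ↦ ?_
    · simpa using step
    · cases n with
      | zero => norm_num [ea] at h
      | succ m => exact_mod_cast two_le_aa_succ hirr hx hα.1 h

lemma one_le_qa_succ (hα : α ∈ Ioc 0 1) (n : ℕ) : 1 ≤ qa α x (n + 1) := by
  have hmono : Monotone (qa α x) := monotone_nat_of_le_succ fun n ↦ (qa_le_qa_succ hirr hx hα n).2
  exact hmono (Nat.le_add_left 1 n)

lemma qa_succ_lt_of_da_eq (hα : α ∈ Ioc 0 1) {n : ℕ} (hd : da α x n = α - 1) :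
    qa α x (n + 1) < qa α x (n + 2) := by
  have ha : (aa α x n : ℝ) = 1 / xa α x n + 1 - α := by rw [da] at hd; linarith
  have hinv : 1 < 1 / xa α x n :=
    one_lt_one_div (xa_pos hirr hx n) (xa_lt_one hirr hx (Ioc_subset_Icc_self hα) n)
  have ha2 : 1 < aa α x n := by exact_mod_cast (show (1 : ℝ) < aa α x n by linarith [hα.2])
  have ha3 : ea α x n = -1 → 2 < aa α x n := by
    intro h
    cases n with
    | zero => norm_num [ea] at h
    | succ m =>
      have := one_add_lt_inv_xa_succ hα.1 (xa_pos hirr hx (m + 1)) h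
      exact_mod_cast (show (2 : ℝ) < aa α x (m + 1) by linarith)
  have hq := qa_le_qa_succ hirr hx hα n
  have step := add_one_mul_le_mul_add_mul (a := aa α x n) (k := 1) (ea_eq_one_or_neg_one α x n)
    hq.1 hq.2 (by exact_mod_cast Int.add_one_le_of_lt ha2)
    fun h ↦ by exact_mod_cast Int.add_one_le_of_lt (ha3 h)
  rw [qa_add_two]
  linarith [one_le_qa_succ hirr hx hα n]

lemma betaP_succ_mul_qa_add (n : ℕ) :
    betaP α x (n + 1) * (qa α x (n + 2) + da α x n * qa α x (n + 1)) = 1 := by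
  induction n with
  | zero =>
    have hinv : xa α x 0 * (1 / xa α x 0) = 1 := mul_one_div_cancel (xa_pos hirr hx 0).ne'
    rw [betaP, Finset.prod_range_one, qa_add_two, da]
    simp only [qa, ea]
    linear_combination hinv
  | succ n ih =>
    have hinv : xa α x (n + 1) * (1 / xa α x (n + 1)) = 1 :=
      mul_one_div_cancel (xa_pos hirr hx (n + 1)).ne'
    have hb : betaP α x (n + 2) = betaP α x (n + 1) * xa α x (n + 1) := Finset.prod_range_succ _ _
    rw [hb, qa_add_two, show da α x (n + 1) = 1 / xa α x (n + 1) - aa α x (n + 1) from rfl]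
    linear_combination ih + betaP α x (n + 1) * qa α x (n + 1) * ea_succ_mul_xa_succ α x n
      + betaP α x (n + 1) * qa α x (n + 2) * hinv

lemma da_mul_qa_lt (hα : α ∈ Ioc 0 1) (n : ℕ) :
    da α x n * qa α x (n + 1) < α * qa α x (n + 2) := by
  have hq := one_le_qa_succ hirr hx hα n
  have hqQ := (qa_le_qa_succ hirr hx hα (n + 1)).2
  nlinarith [(da_mem_Ico α x n).2, hα.1]

lemma sub_one_mul_qa_lt (hα : α ∈ Ioc 0 1) (n : ℕ) :
    (α - 1) * qa α x (n + 2) < da α x n * qa α x (n + 1) := by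
  have hq := one_le_qa_succ hirr hx hα n
  have hqQ := (qa_le_qa_succ hirr hx hα (n + 1)).2
  rcases (da_mem_Ico α x n).1.lt_or_eq with hlt | heq
  · nlinarith [hα.2]
  · have hα1 : α < 1 :=
      lt_of_le_of_ne hα.2 fun h ↦ da_ne_zero hirr hx n (by rw [← heq, h, sub_self])
    have hqQ' := qa_succ_lt_of_da_eq hirr hx hα heq.symm
    rw [← heq]
    nlinarith

end Orbit

lemma one_div_lt_and_lt_one_div_of_mul_eq {α u Q D : ℝ} (hα : 0 < α) (hQ : 0 < Q)
    (hu : u * D = Q) (hD : D ∈ Ioo (α * Q) ((1 + α) * Q)) : 1 / (1 + α) < u ∧ u < 1 / α := by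
  have hDpos : 0 < D := (mul_pos hα hQ).trans hD.1
  rw [← eq_div_iff hDpos.ne'] at hu
  subst hu
  constructor
  · rw [div_lt_div_iff₀ (by linarith) hDpos]; linarith [hD.2]
  · rw [div_lt_div_iff₀ hDpos hα]; linarith [hD.1]

theorem beta_mul_q_bounds (α : ℝ) (hα : α ∈ Set.Ioc (0 : ℝ) 1) (x : ℝ)
    (hirr : Irrational x) (hx : x ∈ Set.Ioo 0 (max α (1 - α))) (n : ℕ) :
    1 / (1 + α) < betaP α x (n + 1) * qa α x (n + 2) ∧
      betaP α x (n + 1) * qa α x (n + 2) < 1 / α := by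
  have hQ : 0 < qa α x (n + 2) := one_pos.trans_le (one_le_qa_succ hirr hx hα (n + 1))
  refine one_div_lt_and_lt_one_div_of_mul_eq hα.1 hQ
    (D := qa α x (n + 2) + da α x n * qa α x (n + 1)) ?_ ⟨?_, ?_⟩
  · linear_combination qa α x (n + 2) * betaP_succ_mul_qa_add hirr hx n
  · linarith [sub_one_mul_qa_lt hirr hx hα n]
  · linarith [da_mul_qa_lt hirr hx hα n]
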